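/- Let (A_n) be the stationary Gaussian AR(1) sequence with variance 1/2 and covariance Cov(A_0, A_n) = ρⁿ/2, and let (ν_t) be an independent Poisson process with intensity λ > 0. Define J(t) = A_{ν_t}. Then for every t, τ ≥ 0, E[J(t) J(t+τ)] = (1/2) e^{-λ(1-ρ)τ}. -/

import Mathlib

/-!
Given `(ν_t, ν_{t+τ} - ν_t) = (n, k)`, which is independent of the sequence `A`, the integrand
has mean `E[A_n A_{n+k}] = ρᵏ / 2`, whatever `n` is. Hence the covariance is `E[ρ^K] / 2` for the
Poisson(`lτ`) increment `K`, and the Poisson generating function `E[x^K] = e^{lτ(x-1)}` finishes.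
-/

open MeasureTheory ProbabilityTheory Real Function
open scoped NNReal Nat

section SecondMoments

variable {Ω : Type*} {mΩ : MeasurableSpace Ω} {μ : Measure Ω} {f g : Ω → ℝ}

lemma integrable_mul_of_integrable_sq (hf : AEStronglyMeasurable f μ)
    (hg : AEStronglyMeasurable g μ) (hf2 : Integrable (fun ω ↦ f ω ^ 2) μ)
    (hg2 : Integrable (fun ω ↦ g ω ^ 2) μ) : Integrable (fun ω ↦ f ω * g ω) μ :=
  ((memLp_two_iff_integrable_sq hf).2 hf2).integrable_mul ((memLp_two_iff_integrable_sq hg).2 hg2)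

lemma integral_abs_mul_le_of_integrable_sq (hf : AEStronglyMeasurable f μ)
    (hg : AEStronglyMeasurable g μ) (hf2 : Integrable (fun ω ↦ f ω ^ 2) μ)
    (hg2 : Integrable (fun ω ↦ g ω ^ 2) μ) :
    ∫ ω, |f ω * g ω| ∂μ ≤ (∫ ω, f ω ^ 2 ∂μ + ∫ ω, g ω ^ 2 ∂μ) / 2 := by
  rw [← integral_add hf2 hg2, ← integral_div]
  refine integral_mono (integrable_mul_of_integrable_sq hf hg hf2 hg2).abs
    ((hf2.add hg2).div_const 2) fun ω ↦ ?_
  have := two_mul_le_add_sq |f ω| |g ω|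
  rw [sq_abs, sq_abs] at this
  rw [abs_mul]
  linarith

end SecondMoments

namespace ProbabilityTheory

section Freezing

variable {Ω α β E : Type*} {mΩ : MeasurableSpace Ω} {mα : MeasurableSpace α}
  {mβ : MeasurableSpace β} [NormedAddCommGroup E] {μ : Measure Ω} [IsFiniteMeasure μ]
  {X : Ω → α} {Y : Ω → β} {F : α → β → E}

lemma IndepFun.integrable_comp_of_integral_norm_le (hXY : IndepFun X Y μ)
    (hX : AEMeasurable X μ) (hY : AEMeasurable Y μ) (hF : StronglyMeasurable (uncurry F))
    (hint : ∀ a, Integrable (fun ω ↦ F a (Y ω)) μ) {C : ℝ}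
    (hC : ∀ a, ∫ ω, ‖F a (Y ω)‖ ∂μ ≤ C) :
    Integrable (fun ω ↦ F (X ω) (Y ω)) μ := by
  have hFa (a : α) : StronglyMeasurable (F a) := hF.comp_measurable measurable_prodMk_left
  have hprod : Integrable (uncurry F) ((μ.map X).prod (μ.map Y)) := by
    refine (integrable_prod_iff hF.aestronglyMeasurable).2 ⟨.of_forall fun a ↦ ?_, ?_⟩
    · exact (integrable_map_measure (hFa a).aestronglyMeasurable hY).2 (hint a)
    · refine .of_bound hF.norm.integral_prod_right'.aestronglyMeasurable C (.of_forall fun a ↦ ?_)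
      rw [norm_of_nonneg (by positivity)]
      exact (integral_map hY (hFa a).norm.aestronglyMeasurable).trans_le (hC a)
  rw [← hXY.map_prod_eq_prod_map_map hX hY] at hprod
  exact hprod.comp_aemeasurable (hX.prodMk hY)

lemma IndepFun.integral_comp_eq_integral_integral [NormedSpace ℝ E] (hXY : IndepFun X Y μ)
    (hX : AEMeasurable X μ) (hY : AEMeasurable Y μ) (hF : StronglyMeasurable (uncurry F))
    (hint : Integrable (fun ω ↦ F (X ω) (Y ω)) μ) :
    ∫ ω, F (X ω) (Y ω) ∂μ = ∫ ω, ∫ ω', F (X ω) (Y ω') ∂μ ∂μ := by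
  have hmap := hXY.map_prod_eq_prod_map_map hX hY
  have hprod : Integrable (uncurry F) ((μ.map X).prod (μ.map Y)) := by
    rw [← hmap]
    exact (integrable_map_measure hF.aestronglyMeasurable (hX.prodMk hY)).2 hint
  calc ∫ ω, F (X ω) (Y ω) ∂μ = ∫ p, uncurry F p ∂(μ.map fun ω ↦ (X ω, Y ω)) :=
        (integral_map (hX.prodMk hY) hF.aestronglyMeasurable).symm
    _ = ∫ a, ∫ b, F a b ∂(μ.map Y) ∂(μ.map X) := by rw [hmap, integral_prod _ hprod]; rfl
    _ = ∫ ω, ∫ ω', F (X ω) (Y ω') ∂μ ∂μ := by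
        refine (integral_map hX hF.integral_prod_right'.aestronglyMeasurable).trans ?_
        congr with ω
        exact integral_map hY (hF.comp_measurable measurable_prodMk_left).aestronglyMeasurable

end Freezing

lemma integral_pow_poissonMeasure (r : ℝ≥0) (x : ℝ) :
    ∫ n, x ^ n ∂poissonMeasure r = exp (r * (x - 1)) := by
  have hexp : ∑' n : ℕ, (r * x) ^ n / n ! = exp (r * x) := by
    rw [exp_eq_exp_ℝ, NormedSpace.exp_eq_tsum_div]
  calc ∫ n, x ^ n ∂poissonMeasure r = ∑' n : ℕ, exp (-r) * ((r * x) ^ n / n !) := by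
        rw [integral_poissonMeasure]
        congr with n
        rw [smul_eq_mul, mul_pow]
        ring
    _ = exp (r * (x - 1)) := by rw [tsum_mul_left, hexp, ← exp_add]; ring_nf

lemma hasLaw_poissonMeasure_of_measure_eq {Ω : Type*} {mΩ : MeasurableSpace Ω}
    {μ : Measure Ω} {K : Ω → ℕ} (hK : Measurable K) {r : ℝ≥0}
    (h : ∀ k, μ {ω | K ω = k} = ENNReal.ofReal (exp (-r) * r ^ k / k !)) :
    HasLaw K (poissonMeasure r) μ where
  aemeasurable := hK.aemeasurable
  map_eq := Measure.ext_of_singleton fun k ↦ by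
    rw [Measure.map_apply hK (measurableSet_singleton k), poissonMeasure_singleton]
    exact h k

end ProbabilityTheory

theorem par_covariance_general
    {Ω : Type*} [MeasureSpace Ω] [IsProbabilityMeasure (ℙ : Measure Ω)]
    (A : ℕ → Ω → ℝ) (hAmeas : ∀ n, Measurable (A n))
    (ν : ℝ → Ω → ℕ) (hνmeas : ∀ t, Measurable (ν t))
    (ρ l : ℝ) (hl : 0 < l)
    (t τ : ℝ) (hτ : 0 ≤ τ)
    -- the AR(1) covariance structure
    (hAcov : ∀ n k : ℕ, ∫ ω, A n ω * A (n + k) ω ∂ℙ = ρ ^ k / 2)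
    -- the counting process is nondecreasing
    (hmono : ∀ ω, ν t ω ≤ ν (t + τ) ω)
    -- the pair (ν_t, increment) is independent of the whole sequence A
    (hindA : IndepFun (fun ω => (ν t ω, ν (t + τ) ω - ν t ω))
      (fun ω => fun n => A n ω) ℙ)
    (hpoisinc : ∀ k : ℕ, ℙ {ω | ν (t + τ) ω - ν t ω = k}
      = ENNReal.ofReal (Real.exp (-(l * τ)) * (l * τ) ^ k / k.factorial)) :
    ∫ ω, A (ν t ω) ω * A (ν (t + τ) ω) ω ∂ℙ
      = (1 / 2) * Real.exp (-(l * (1 - ρ) * τ)) := by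
  set F : ℕ × ℕ → (ℕ → ℝ) → ℝ := fun p a ↦ a p.1 * a (p.1 + p.2)
  have hF : StronglyMeasurable (uncurry F) :=
    (measurable_from_prod_countable_right fun p : ℕ × ℕ ↦
      show Measurable fun a : ℕ → ℝ ↦ a p.1 * a (p.1 + p.2) by fun_prop).stronglyMeasurable
  have hJ (ω : Ω) : A (ν t ω) ω * A (ν (t + τ) ω) ω
      = F (ν t ω, ν (t + τ) ω - ν t ω) (fun n ↦ A n ω) := by
    simp only [F, Nat.add_sub_cancel' (hmono ω)]
  have hvar (n : ℕ) : ∫ ω, A n ω ^ 2 ∂ℙ = 1 / 2 := by simpa [sq] using hAcov n 0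
  have hsq (n : ℕ) : Integrable (fun ω ↦ A n ω ^ 2) ℙ :=
    .of_integral_ne_zero (by rw [hvar]; norm_num)
  have hprod (n m : ℕ) : Integrable (fun ω ↦ A n ω * A m ω) ℙ :=
    integrable_mul_of_integrable_sq (hAmeas n).aestronglyMeasurable
      (hAmeas m).aestronglyMeasurable (hsq n) (hsq m)
  have habs (n m : ℕ) : ∫ ω, |A n ω * A m ω| ∂ℙ ≤ 1 / 2 :=
    (integral_abs_mul_le_of_integrable_sq (hAmeas n).aestronglyMeasurable
      (hAmeas m).aestronglyMeasurable (hsq n) (hsq m)).trans_eq (by rw [hvar, hvar]; norm_num)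
  have hXY := hindA.integral_comp_eq_integral_integral (by fun_prop) (by fun_prop) hF
    (hindA.integrable_comp_of_integral_norm_le (by fun_prop) (by fun_prop) hF
      (fun p ↦ hprod _ _) (fun p ↦ habs _ _))
  obtain ⟨r, hr⟩ : ∃ r : ℝ≥0, (r : ℝ) = l * τ := ⟨⟨l * τ, by positivity⟩, rfl⟩
  have hK : HasLaw (fun ω ↦ ν (t + τ) ω - ν t ω) (poissonMeasure r) ℙ :=
    hasLaw_poissonMeasure_of_measure_eq (by fun_prop) (hr ▸ hpoisinc)
  calc ∫ ω, A (ν t ω) ω * A (ν (t + τ) ω) ω ∂ℙ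
      = (∫ ω, (fun n : ℕ ↦ ρ ^ n) (ν (t + τ) ω - ν t ω) ∂ℙ) / 2 := by
        simp only [hJ, hXY, F, hAcov, integral_div]
    _ = (1 / 2) * Real.exp (-(l * (1 - ρ) * τ)) := by
        rw [← comp_def, hK.integral_comp (by fun_prop), integral_pow_poissonMeasure, hr]
        ring_nf

/-- For the Poisson-auto-regressive process `J(t) = A_{ν_t}`, where `(Aₙ)` is the
stationary Gaussian AR(1) sequence with `E[Aₙ A_{n+k}] = ρᵏ/2` and `(ν_t)` is an
independent Poisson process with intensity `l > 0`, one has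
`E[J(t) J(t+τ)] = (1/2) e^{-l(1-ρ)τ}`. -/
theorem par_covariance
    {Ω : Type*} [MeasureSpace Ω] [IsProbabilityMeasure (ℙ : Measure Ω)]
    (A : ℕ → Ω → ℝ) (hAmeas : ∀ n, Measurable (A n))
    (ν : ℝ → Ω → ℕ) (hνmeas : ∀ t, Measurable (ν t))
    (ρ l : ℝ) (hρ : |ρ| < 1) (hl : 0 < l)
    (t τ : ℝ) (ht : 0 ≤ t) (hτ : 0 ≤ τ)
    -- the AR(1) covariance structure
    (hAcov : ∀ n k : ℕ, ∫ ω, A n ω * A (n + k) ω ∂ℙ = ρ ^ k / 2)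
    -- the counting process is nondecreasing
    (hmono : ∀ ω, ν t ω ≤ ν (t + τ) ω)
    -- the pair (ν_t, increment) is independent of the whole sequence A
    (hindA : IndepFun (fun ω => (ν t ω, ν (t + τ) ω - ν t ω))
      (fun ω => fun n => A n ω) ℙ)
    -- independent increments
    (hindinc : IndepFun (ν t) (fun ω => ν (t + τ) ω - ν t ω) ℙ)
    -- Poisson marginals of the counting variable and of the increment
    (hpois : ∀ n : ℕ, ℙ {ω | ν t ω = n}
      = ENNReal.ofReal (Real.exp (-(l * t)) * (l * t) ^ n / n.factorial))
    (hpoisinc : ∀ k : ℕ, ℙ {ω | ν (t + τ) ω - ν t ω = k}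
      = ENNReal.ofReal (Real.exp (-(l * τ)) * (l * τ) ^ k / k.factorial)) :
    ∫ ω, A (ν t ω) ω * A (ν (t + τ) ω) ω ∂ℙ
      = (1 / 2) * Real.exp (-(l * (1 - ρ) * τ)) :=
  par_covariance_general A hAmeas ν hνmeas ρ l hl t τ hτ hAcov hmono hindA hpoisinc
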